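/- Let N ≥ 2, M = (m_{i,j}) ∈ M(N,r) with λ = ro(M), and fix 1 ≤ h ≤ N, 1 < k ≤ N, and an integer x with 0 < x ≤ m_{h,k} and Σ_{j=1}^{k−1} m_{h,j} + x < λ_h. Then s_{λ̃_{h−1} + Σ_{j=1}^{k−1} m_{h,j} + x} · Π_{k−1} = Π_{k−1} · s_{σ_{h−1,k}+x}, where Π_{k−1} = (w_{2,1} w_{3,1} ⋯ w_{N,1})(w_{2,2} ⋯ w_{N,2}) ⋯ (w_{2,k−1} ⋯ w_{N,k−1}). -/
import Mathlib


open Equiv Finset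

/-- The simple transposition `s i = (i, i+1)` (1-based) in the symmetric group `W` on
`{1, …, r}`, realised as `Equiv.Perm (Fin r)`, where the point `x : Fin r` carries the
label `x.val + 1`.  For `i` outside the range `1 ≤ i < r` we set `s i = 1`. -/
def sT (r : ℕ) (i : ℕ) : Equiv.Perm (Fin r) :=
  if h : 1 ≤ i ∧ i < r then Equiv.swap ⟨i - 1, by omega⟩ ⟨i, h.2⟩ else 1

/-- The ascending product `s_a · s_{a+1} ⋯ s_{a+n-1}` (equal to `1` when `n = 0`);
the rightmost factor acts first. -/
def ascProd (r a n : ℕ) : Equiv.Perm (Fin r) :=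
  ((List.range n).map (fun t => sT r (a + t))).prod

/-- The descending product `s_b · s_{b-1} ⋯ s_{b-n+1}` (equal to `1` when `n = 0`);
the rightmost factor acts first. -/
def descProd (r b n : ℕ) : Equiv.Perm (Fin r) :=
  ((List.range n).map (fun t => sT r (b - t))).prod

/-- The Coxeter length `ℓ(w)`, i.e. the number of inversions of `w`. -/
def clen {r : ℕ} (w : Equiv.Perm (Fin r)) : ℕ :=
  (Finset.univ.filter (fun p : Fin r × Fin r => p.1 < p.2 ∧ w p.2 < w p.1)).card

/-- `ptil lam i` is the partial sum `λ̃_i = λ_1 + ⋯ + λ_i` (1-based `i`). -/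
def ptil {N : ℕ} (lam : Fin N → ℕ) (i : ℕ) : ℕ :=
  ∑ l : Fin N, if l.val + 1 ≤ i then lam l else 0

/-- The block `N_i^λ = {λ̃_{i-1}+1, …, λ̃_i}` (1-based `i`), as a set of points of `Fin r`
(the point `x` has label `x.val + 1`). -/
def blockSet (r : ℕ) {N : ℕ} (lam : Fin N → ℕ) (i : ℕ) : Finset (Fin r) :=
  Finset.univ.filter (fun x => ptil lam (i - 1) ≤ x.val ∧ x.val < ptil lam i)

/-- The index of the block of `λ` containing the point `x`. -/
def blockOf {r N : ℕ} (lam : Fin N → ℕ) (x : Fin r) : ℕ :=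
  ((Finset.range N).filter (fun i => ptil lam (i + 1) ≤ x.val)).card

/-- The Young subgroup `W_λ`: all permutations stabilizing each block `N_i^λ`. -/
def young (r : ℕ) {N : ℕ} (lam : Fin N → ℕ) : Subgroup (Equiv.Perm (Fin r)) where
  carrier := {w | ∀ x : Fin r, blockOf lam (w x) = blockOf lam x}
  one_mem' := by intro x; rfl
  mul_mem' := by
    intro a b ha hb x
    have h := (ha (b x)).trans (hb x)
    simpa [Equiv.Perm.mul_apply] using h
  inv_mem' := by
    intro a ha x
    have h := ha (a⁻¹ x)
    simpa using h.symm

/-- The double coset `W_λ d W_μ`, as a set of permutations. -/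
def dcoset (r : ℕ) {N : ℕ} (lam mu : Fin N → ℕ) (d : Equiv.Perm (Fin r)) :
    Set (Equiv.Perm (Fin r)) :=
  {w | ∃ x ∈ young r lam, ∃ y ∈ young r mu, w = x * d * y}

/-- `d ∈ 𝒟_{λμ}`: `d` has minimal length in its double coset `W_λ d W_μ`. -/
def isMinRep (r : ℕ) {N : ℕ} (lam mu : Fin N → ℕ) (d : Equiv.Perm (Fin r)) : Prop :=
  ∀ w ∈ dcoset r lam mu d, clen d ≤ clen w

/-- The composition `ro M` of row sums of a matrix. -/
def rowSums {N : ℕ} (M : Fin N → Fin N → ℕ) : Fin N → ℕ := fun i => ∑ j, M i j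

/-- The composition `co M` of column sums of a matrix. -/
def colSums {N : ℕ} (M : Fin N → Fin N → ℕ) : Fin N → ℕ := fun j => ∑ i, M i j

/-- `d` is the distinguished double coset representative `d_M` attached to the matrix `M`:
`d` is the minimal length element in its `(W_{ro M}, W_{co M})` double coset, and
`|N_i^{ro M} ∩ d(N_j^{co M})| = m_{i,j}` for all `i, j`. -/
def isDM (r : ℕ) {N : ℕ} (M : Fin N → Fin N → ℕ) (d : Equiv.Perm (Fin r)) : Prop :=
  isMinRep r (rowSums M) (colSums M) d ∧
    ∀ i j : Fin N,
      ((blockSet r (rowSums M) (i.val + 1)) ∩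
        (blockSet r (colSums M) (j.val + 1)).image d).card = M i j

/-- The `(i,j)` entry of `M` with 1-based indices (`0` outside the range). -/
def ent {N : ℕ} (M : Fin N → Fin N → ℕ) (i j : ℕ) : ℕ :=
  if h : 1 ≤ i ∧ i ≤ N ∧ 1 ≤ j ∧ j ≤ N then M ⟨i - 1, by omega⟩ ⟨j - 1, by omega⟩ else 0

/-- `μ̃_{j-1}` for `μ = co M`: the sum of the first `j - 1` column sums of `M`. -/
def colPS {N : ℕ} (M : Fin N → Fin N → ℕ) (j : ℕ) : ℕ :=
  ∑ p : Fin N × Fin N, if p.2.val + 1 < j then M p.1 p.2 else 0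

/-- `σ_{i,j} = μ̃_{j-1} + Σ_{k ≤ i, l ≥ j} m_{k,l}` (1-based `i, j`). -/
def sigmaS {N : ℕ} (M : Fin N → Fin N → ℕ) (i j : ℕ) : ℕ :=
  colPS M j + ∑ p : Fin N × Fin N, if p.1.val + 1 ≤ i ∧ j ≤ p.2.val + 1 then M p.1 p.2 else 0

/-- `m̃_{i,j} = μ̃_{j-1} + Σ_{h ≤ i} m_{h,j}` (1-based `i, j`): the partial sum of the
column-reading sequence of `M` up to the entry `(i, j)`. -/
def mtil {N : ℕ} (M : Fin N → Fin N → ℕ) (i j : ℕ) : ℕ :=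
  colPS M j + ∑ p : Fin N × Fin N, if p.1.val + 1 ≤ i ∧ p.2.val + 1 = j then M p.1 p.2 else 0

/-- The element `w_{i,j}` (1-based `i, j`):
`w_{i,j} = (s_{σ_{i-1,j}} ⋯ s_{m̃_{i-1,j}+1})(s_{σ_{i-1,j}+1} ⋯ s_{m̃_{i-1,j}+2}) ⋯
(s_{σ_{i-1,j}+m_{i,j}-1} ⋯ s_{m̃_{i,j}})`, with `w_{i,j} = 1` when `m_{i,j} = 0` or
`σ_{i-1,j} = m̃_{i-1,j}`. -/
def wE (r : ℕ) {N : ℕ} (M : Fin N → Fin N → ℕ) (i j : ℕ) : Equiv.Perm (Fin r) :=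
  ((List.range (ent M i j)).map
    (fun x => descProd r (sigmaS M (i - 1) j + x) (sigmaS M (i - 1) j - mtil M (i - 1) j))).prod

/-- The column product `w_{2,j} w_{3,j} ⋯ w_{N,j}`. -/
def colProd (r : ℕ) {N : ℕ} (M : Fin N → Fin N → ℕ) (j : ℕ) : Equiv.Perm (Fin r) :=
  ((List.range (N - 1)).map (fun t => wE r M (t + 2) j)).prod

/-- `Π_t`: the product of the first `t` column products
`(w_{2,1} ⋯ w_{N,1})(w_{2,2} ⋯ w_{N,2}) ⋯ (w_{2,t} ⋯ w_{N,t})`. -/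
def piProd (r : ℕ) {N : ℕ} (M : Fin N → Fin N → ℕ) (t : ℕ) : Equiv.Perm (Fin r) :=
  ((List.range t).map (fun c => colProd r M (c + 1))).prod


/-! ### Auxiliary machinery -/

private def bmf (a m g p : ℕ) : ℕ :=
  if a ≤ p ∧ p < a + m then p + g
  else if a + m ≤ p ∧ p < a + m + g then p - m
  else p

private lemma bmf_lt {r a m g p : ℕ} (hp : p < r) (h : a + m + g ≤ r) : bmf a m g p < r := by
  unfold bmf; split_ifs <;> omega

private lemma sT_val (r i : ℕ) (h1 : 1 ≤ i) (h2 : i < r) (p : Fin r) :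
    ((sT r i) p).val = if p.val = i - 1 then i else if p.val = i then i - 1 else p.val := by
  unfold sT
  rw [dif_pos ⟨h1, h2⟩]
  rw [Equiv.swap_apply_def]
  split_ifs with hA hB hC hD hE <;>
    first
      | rfl
      | (exfalso; rw [Fin.ext_iff] at *; simp only [] at *; omega)
      | (rw [Fin.ext_iff] at *; simp only [] at *; omega)

private lemma sT_eq (r i : ℕ) (h1 : 1 ≤ i) (h2 : i < r) :
    sT r i = Equiv.swap ⟨i - 1, by omega⟩ ⟨i, h2⟩ := dif_pos ⟨h1, h2⟩

private lemma descProd_succ (r b n : ℕ) :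
    descProd r b (n + 1) = descProd r b n * sT r (b - n) := by
  unfold descProd
  rw [List.range_succ, List.map_append, List.prod_append]
  simp

private lemma descProd_val (r : ℕ) : ∀ (g a : ℕ), a + g < r → ∀ p : Fin r,
    ((descProd r (a + g) g) p).val = bmf a 1 g p.val := by
  intro g
  induction g with
  | zero =>
    intro a ha p
    simp only [descProd, List.range_zero, List.map_nil, List.prod_nil, Equiv.Perm.coe_one, id_eq]
    unfold bmf; split_ifs <;> omega
  | succ g ih =>
    intro a ha p
    have hb : a + (g + 1) = (a + 1) + g := by omega
    rw [hb, descProd_succ]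
    have hsub : a + 1 + g - g = a + 1 := by omega
    rw [hsub, Equiv.Perm.mul_apply]
    rw [ih (a + 1) (by omega)]
    rw [sT_val r (a + 1) (by omega) (by omega)]
    unfold bmf
    split_ifs <;> omega

private lemma prodBM (r : ℕ) : ∀ (m a g : ℕ), a + m + g ≤ r → ∀ p : Fin r,
    ((((List.range m).map (fun x => descProd r (a + g + x) g)).prod) p).val
      = bmf a m g p.val := by
  intro m
  induction m with
  | zero =>
    intro a g ha p
    simp only [List.range_zero, List.map_nil, List.prod_nil, Equiv.Perm.coe_one, id_eq]
    unfold bmf; split_ifs <;> omega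
  | succ m ih =>
    intro a g ha p
    rw [List.range_succ_eq_map, List.map_cons, List.prod_cons, List.map_map]
    have hf : ((fun x => descProd r (a + g + x) g) ∘ Nat.succ)
        = (fun x => descProd r ((a + 1) + g + x) g) := by
      funext x
      show descProd r (a + g + Nat.succ x) g = _
      have hx : a + g + Nat.succ x = (a + 1) + g + x := by omega
      rw [hx]
    rw [hf, Equiv.Perm.mul_apply]
    have h1 : ((List.map (fun x => descProd r ((a + 1) + g + x) g) (List.range m)).prod p)
        = ⟨bmf (a + 1) m g p.val, bmf_lt p.isLt (by omega)⟩ :=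
      Fin.ext (ih (a + 1) g (by omega) p)
    rw [h1]
    have h2 : a + g + 0 = a + g := by omega
    rw [h2, descProd_val r g a (by omega)]
    show bmf a 1 g (bmf (a + 1) m g p.val) = bmf a (m + 1) g p.val
    unfold bmf
    split_ifs <;> omega

/-! ### Auxiliary sums -/

private def CC {N : ℕ} (M : Fin N → Fin N → ℕ) (h j k : ℕ) : ℕ :=
  ∑ p : Fin N × Fin N,
    if p.1.val + 1 = h ∧ j ≤ p.2.val + 1 ∧ p.2.val + 1 < k then M p.1 p.2 else 0
private def XX {N : ℕ} (M : Fin N → Fin N → ℕ) (h k : ℕ) : ℕ :=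
  ∑ p : Fin N × Fin N, if p.1.val + 1 = h ∧ k ≤ p.2.val + 1 then M p.1 p.2 else 0

section arith
variable {N : ℕ} (M : Fin N → Fin N → ℕ)

private lemma ent_sum (i j : ℕ) (h1 : 1 ≤ i) (h2 : i ≤ N) (h3 : 1 ≤ j) (h4 : j ≤ N) :
    ∑ p : Fin N × Fin N, (if p.1.val + 1 = i ∧ p.2.val + 1 = j then M p.1 p.2 else 0)
      = ent M i j := by
  rw [ent, dif_pos ⟨h1, h2, h3, h4⟩]
  rw [Fintype.sum_eq_single ((⟨i - 1, by omega⟩, ⟨j - 1, by omega⟩) : Fin N × Fin N)]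
  · rw [if_pos]; exact ⟨by simp; omega, by simp; omega⟩
  · intro p hp
    rw [if_neg]
    intro ⟨e1, e2⟩
    apply hp
    rw [Prod.ext_iff, Fin.ext_iff, Fin.ext_iff]
    constructor <;> simp <;> omega

private lemma mtil_le_sigmaS (i j : ℕ) : mtil M i j ≤ sigmaS M i j := by
  unfold mtil sigmaS
  refine Nat.add_le_add_left (Finset.sum_le_sum fun p _ => ?_) _
  split_ifs <;> omega

private lemma mtil_succ (i j : ℕ) (h1 : 1 ≤ i) (h2 : i ≤ N) (h3 : 1 ≤ j) (h4 : j ≤ N) :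
    mtil M i j = mtil M (i - 1) j + ent M i j := by
  rw [← ent_sum M i j h1 h2 h3 h4]
  unfold mtil
  rw [add_assoc, ← Finset.sum_add_distrib]
  refine congrArg _ (Finset.sum_congr rfl fun p _ => ?_)
  split_ifs <;> omega

private lemma sigmaS_succ (i j : ℕ) (h1 : 1 ≤ i) (h2 : i ≤ N) (h3 : 1 ≤ j) (h4 : j ≤ N) :
    sigmaS M (i - 1) j + ent M i j ≤ sigmaS M i j := by
  rw [← ent_sum M i j h1 h2 h3 h4]
  unfold sigmaS
  rw [add_assoc, ← Finset.sum_add_distrib]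
  refine Nat.add_le_add_left (Finset.sum_le_sum fun p _ => ?_) _
  split_ifs <;> omega

private lemma sigmaS_mono (i i' j : ℕ) (h : i ≤ i') : sigmaS M i j ≤ sigmaS M i' j := by
  unfold sigmaS
  refine Nat.add_le_add_left (Finset.sum_le_sum fun p _ => ?_) _
  split_ifs <;> omega

private lemma mtil_mono (i i' j : ℕ) (h : i ≤ i') : mtil M i j ≤ mtil M i' j := by
  unfold mtil
  refine Nat.add_le_add_left (Finset.sum_le_sum fun p _ => ?_) _
  split_ifs <;> omega

private lemma sigmaS_le_r (i j r : ℕ) (hr : ∑ p : Fin N × Fin N, M p.1 p.2 = r) :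
    sigmaS M i j ≤ r := by
  rw [← hr]
  unfold sigmaS colPS
  rw [← Finset.sum_add_distrib]
  refine Finset.sum_le_sum fun p _ => ?_
  split_ifs <;> omega

private lemma key_ineq (h k i j : ℕ) (hhi : h ≤ i) (hjk : j + 1 ≤ k) :
    sigmaS M (h - 1) j + mtil M i j + CC M h (j + 1) k + XX M h k
      ≤ sigmaS M i j + mtil M (h - 1) j := by
  unfold sigmaS mtil CC XX colPS
  simp only [← Finset.sum_add_distrib, add_assoc]
  refine Finset.sum_le_sum fun p _ => ?_
  split_ifs <;> omega

private lemma col_transition (h j : ℕ) :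
    sigmaS M (h - 1) (j + 1) + mtil M (h - 1) j = sigmaS M (h - 1) j + mtil M N j := by
  unfold sigmaS mtil colPS
  simp only [← Finset.sum_add_distrib, add_assoc]
  refine Finset.sum_congr rfl fun p _ => ?_
  have := p.1.isLt
  split_ifs <;> omega

private lemma CC_step (h j k : ℕ) (h1 : 1 ≤ h) (h2 : h ≤ N) (h3 : 1 ≤ j) (h4 : j ≤ N)
    (h5 : j < k) : CC M h j k = ent M h j + CC M h (j + 1) k := by
  rw [← ent_sum M h j h1 h2 h3 h4]
  unfold CC
  rw [← Finset.sum_add_distrib]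
  refine Finset.sum_congr rfl fun p _ => ?_
  split_ifs <;> omega

private lemma CC_kk (h k : ℕ) : CC M h k k = 0 := by
  unfold CC
  refine Finset.sum_eq_zero fun p _ => ?_
  rw [if_neg]; omega

private lemma Q_bound (h j k r : ℕ) (hjk : j ≤ k) (hr : ∑ p : Fin N × Fin N, M p.1 p.2 = r) :
    sigmaS M (h - 1) j + CC M h j k + XX M h k ≤ r := by
  rw [← hr]
  unfold sigmaS CC XX colPS
  simp only [← Finset.sum_add_distrib, add_assoc]
  refine Finset.sum_le_sum fun p _ => ?_
  split_ifs <;> omega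

private lemma sigmaS_one (h : ℕ) : sigmaS M (h - 1) 1 = ptil (rowSums M) (h - 1) := by
  unfold sigmaS colPS ptil rowSums
  have step : ∀ l : Fin N, (if l.val + 1 ≤ h - 1 then ∑ jj, M l jj else 0)
      = ∑ jj : Fin N, (if l.val + 1 ≤ h - 1 then M l jj else 0) := by
    intro l; split_ifs <;> simp
  rw [Finset.sum_congr rfl fun l _ => step l]
  have hz : (∑ p : Fin N × Fin N, if p.2.val + 1 < 1 then M p.1 p.2 else 0) = 0 :=
    Finset.sum_eq_zero fun p _ => by rw [if_neg]; omega
  rw [hz, zero_add, Fintype.sum_prod_type]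
  refine Finset.sum_congr rfl fun l _ => Finset.sum_congr rfl fun jj _ => ?_
  show (if l.val + 1 ≤ h - 1 ∧ 1 ≤ jj.val + 1 then M l jj else 0)
      = (if l.val + 1 ≤ h - 1 then M l jj else 0)
  split_ifs <;> omega

private lemma rowSums_split (h k : ℕ) (h1 : 1 ≤ h) (h2 : h ≤ N) :
    rowSums M ⟨h - 1, by omega⟩ = CC M h 1 k + XX M h k := by
  unfold CC XX
  rw [← Finset.sum_add_distrib]
  have key : rowSums M ⟨h - 1, by omega⟩
      = ∑ p : Fin N × Fin N, (if p.1.val + 1 = h then M p.1 p.2 else 0) := by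
    rw [Fintype.sum_prod_type]
    rw [Fintype.sum_eq_single (⟨h - 1, by omega⟩ : Fin N)]
    · rw [rowSums]
      refine Finset.sum_congr rfl fun jj _ => ?_
      have hc : ((⟨h - 1, by omega⟩ : Fin N) : ℕ) + 1 = h := by
        show h - 1 + 1 = h; omega
      rw [if_pos hc]
    · intro p hp
      refine Finset.sum_eq_zero fun jj _ => ?_
      refine if_neg fun e => hp (Fin.ext ?_)
      have e' : p.val + 1 = h := e
      show p.val = h - 1
      omega
  rw [key]
  refine Finset.sum_congr rfl fun p _ => ?_
  split_ifs <;> omega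

private lemma icc_sum (h k : ℕ) (h1 : 1 ≤ h) (h2 : h ≤ N) (hk : 1 ≤ k) (h4 : k ≤ N) :
    ∑ j ∈ Finset.Icc 1 (k - 1), ent M h j = CC M h 1 k := by
  have hlt : h - 1 < N := by omega
  unfold CC
  rw [Fintype.sum_prod_type]
  rw [Fintype.sum_eq_single (⟨h - 1, hlt⟩ : Fin N)]
  · have hstep : ∀ jj : Fin N,
        (if ((⟨h - 1, hlt⟩ : Fin N) : ℕ) + 1 = h ∧ 1 ≤ jj.val + 1 ∧ jj.val + 1 < k
          then M ⟨h - 1, hlt⟩ jj else 0)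
        = (fun t => if t + 1 < k then ent M h (t + 1) else 0) jj.val := by
      intro jj
      have he : ent M h (jj.val + 1) = M ⟨h - 1, hlt⟩ jj := by
        rw [ent, dif_pos ⟨h1, h2, by omega, by omega⟩]
        congr 1 <;>
          first
            | rfl
            | exact Fin.ext (show jj.val + 1 - 1 = jj.val from by omega)
      show _ = (if jj.val + 1 < k then ent M h (jj.val + 1) else 0)
      split_ifs with c1 c2 c3
      · rw [he]
      · exact absurd c1.2.2 c2
      · refine absurd ⟨?_, by omega, c3⟩ c1
        show h - 1 + 1 = h
        omega
      · rfl
    rw [Finset.sum_congr rfl fun jj _ => hstep jj]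
    rw [Fin.sum_univ_eq_sum_range (fun t => if t + 1 < k then ent M h (t + 1) else 0) N]
    rw [← Finset.sum_filter]
    have hfil : (Finset.range N).filter (fun t => t + 1 < k) = Finset.range (k - 1) := by
      ext t; simp; omega
    rw [hfil]
    rw [show Finset.Icc 1 (k - 1) = Finset.Ico 1 k from by ext t; simp; omega]
    rw [Finset.sum_Ico_eq_sum_range]
    refine Finset.sum_congr rfl fun t _ => ?_
    rw [show 1 + t = t + 1 from by omega]
  · intro p hp
    refine Finset.sum_eq_zero fun jj _ => ?_
    refine if_neg fun e => hp (Fin.ext ?_)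
    have e' : p.val + 1 = h := e.1
    show p.val = h - 1
    omega

end arith

/-! ### The action of `wE` and of the partial products -/

private lemma wE_val (r : ℕ) {N : ℕ} (M : Fin N → Fin N → ℕ)
    (hr : ∑ p : Fin N × Fin N, M p.1 p.2 = r)
    (i j : ℕ) (h1i : 1 ≤ i) (hiN : i ≤ N) (h1j : 1 ≤ j) (hjN : j ≤ N) (p : Fin r) :
    ((wE r M i j) p).val
      = bmf (mtil M (i - 1) j) (ent M i j)
          (sigmaS M (i - 1) j - mtil M (i - 1) j) p.val := by
  have ha : mtil M (i - 1) j ≤ sigmaS M (i - 1) j := mtil_le_sigmaS M _ _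
  have hb : sigmaS M (i - 1) j + ent M i j ≤ r :=
    le_trans (sigmaS_succ M i j h1i hiN h1j hjN) (sigmaS_le_r M i j r hr)
  unfold wE
  have hfun : (fun x => descProd r (sigmaS M (i - 1) j + x)
        (sigmaS M (i - 1) j - mtil M (i - 1) j))
      = fun x => descProd r
          (mtil M (i - 1) j + (sigmaS M (i - 1) j - mtil M (i - 1) j) + x)
          (sigmaS M (i - 1) j - mtil M (i - 1) j) := by
    funext x
    rw [Nat.add_sub_cancel' ha]
  rw [hfun]
  exact prodBM r (ent M i j) (mtil M (i - 1) j) _ (by omega) p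

private lemma piProd_val (N r : ℕ) (hN : 2 ≤ N) (M : Fin N → Fin N → ℕ)
    (hr : ∑ p : Fin N × Fin N, M p.1 p.2 = r)
    (h k y : ℕ) (hh1 : 1 ≤ h) (hhN : h ≤ N) (hk1 : 1 < k) (hkN : k ≤ N)
    (hy : y < XX M h k) (p : Fin r) (hp : p.val = sigmaS M (h - 1) k + y) :
    (piProd r M (k - 1) p).val = sigmaS M (h - 1) 1 + CC M h 1 k + y := by
  have rowstep : ∀ j, 1 ≤ j → j < k → ∀ i, 2 ≤ i → i ≤ N → ∀ q : Fin r,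
      q.val = (sigmaS M (h - 1) j - mtil M (h - 1) j) + CC M h (j + 1) k + y + mtil M (if h ≤ i then i else h) j →
      ((wE r M i j) q).val = (sigmaS M (h - 1) j - mtil M (h - 1) j) + CC M h (j + 1) k + y + mtil M (if h ≤ (i - 1) then (i - 1) else h) j := by
    intro j hj1 hjk i hi2 hiN q hq
    rw [wE_val r M hr i j (by omega) hiN hj1 (by omega) q, hq]
    have hD : mtil M (h - 1) j ≤ sigmaS M (h - 1) j := mtil_le_sigmaS M _ _
    have hA1 : mtil M (i - 1) j ≤ sigmaS M (i - 1) j := mtil_le_sigmaS M _ _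
    have hA2h : mtil M h j = mtil M (h - 1) j + ent M h j :=
      mtil_succ M h j hh1 hhN hj1 (by omega)
    rcases le_or_gt i h with hih | hhi
    · rw [show (if h ≤ i then i else h) = h from by split_ifs <;> omega,
         show (if h ≤ i - 1 then i - 1 else h) = h from by split_ifs <;> omega]
      have hA3 : sigmaS M (i - 1) j + ent M i j ≤ sigmaS M i j :=
        sigmaS_succ M i j (by omega) hiN hj1 (by omega)
      have hmono2 : sigmaS M i j ≤ sigmaS M (h - 1) j ∨ i = h := by
        rcases eq_or_lt_of_le hih with he | hlt
        · right; exact he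
        · left; exact sigmaS_mono M i (h - 1) j (by omega)
      unfold bmf
      rcases hmono2 with hm | hm
      · split_ifs <;> omega
      · subst hm
        split_ifs <;> omega
    · rw [show (if h ≤ i then i else h) = i from by split_ifs <;> omega,
         show (if h ≤ i - 1 then i - 1 else h) = i - 1 from by split_ifs <;> omega]
      have hA2i : mtil M i j = mtil M (i - 1) j + ent M i j :=
        mtil_succ M i j (by omega) hiN hj1 (by omega)
      have hA6 : sigmaS M (h - 1) j + mtil M (i - 1) j + CC M h (j + 1) k + XX M h k
          ≤ sigmaS M (i - 1) j + mtil M (h - 1) j :=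
        key_ineq M h k (i - 1) j (by omega) (by omega)
      have hA12 : mtil M (h - 1) j ≤ mtil M (i - 1) j :=
        mtil_mono M (h - 1) (i - 1) j (by omega)
      unfold bmf
      split_ifs <;> omega
  have hQlt : ∀ j, j ≤ k → sigmaS M (h - 1) (j) + CC M h (j) k + y < r := by
    intro j hj
    have := Q_bound M h j k r hj hr
    omega
  have hRQ : ∀ j, 1 ≤ j → j < k → (sigmaS M (h - 1) j - mtil M (h - 1) j) + CC M h (j + 1) k + y + mtil M (if h ≤ N then N else h) j = sigmaS M (h - 1) ((j + 1)) + CC M h ((j + 1)) k + y := by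
    intro j hj1 hjk
    have h7 := col_transition M h j
    have hD : mtil M (h - 1) j ≤ sigmaS M (h - 1) j := mtil_le_sigmaS M _ _
    rw [show (if h ≤ N then N else h) = N from by split_ifs <;> omega]
    omega
  have hRlt : ∀ j i, 1 ≤ j → j < k → i ≤ N → (sigmaS M (h - 1) j - mtil M (h - 1) j) + CC M h (j + 1) k + y + mtil M (if h ≤ i then i else h) j < r := by
    intro j i hj1 hjk hiN
    have h1 : mtil M (if h ≤ i then i else h) j ≤ mtil M N j :=
      mtil_mono M _ N j (by split_ifs <;> omega)
    have h2 := hRQ j hj1 hjk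
    have h3 := hQlt (j + 1) (by omega)
    rw [show (if h ≤ N then N else h) = N from by split_ifs <;> omega] at h2
    omega
  have colstep : ∀ j, 1 ≤ j → j < k → ∀ q : Fin r,
      q.val = sigmaS M (h - 1) ((j + 1)) + CC M h ((j + 1)) k + y → ((colProd r M j) q).val = sigmaS M (h - 1) (j) + CC M h (j) k + y := by
    intro j hj1 hjk q hq
    have tail : ∀ s, s ≤ N - 1 → ∀ q : Fin r, q.val = (sigmaS M (h - 1) j - mtil M (h - 1) j) + CC M h (j + 1) k + y + mtil M (if h ≤ N then N else h) j →
        ((((List.range s).map (fun t => wE r M (t + (N - s) + 1) j)).prod) q).val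
          = (sigmaS M (h - 1) j - mtil M (h - 1) j) + CC M h (j + 1) k + y + mtil M (if h ≤ (N - s) then (N - s) else h) j := by
      intro s
      induction s with
      | zero =>
        intro _ q hq
        rw [show N - 0 = N from rfl]
        simpa using hq
      | succ s ih =>
        intro hs q hq
        rw [List.range_succ_eq_map, List.map_cons, List.prod_cons, List.map_map]
        have hfun : ((fun t => wE r M (t + (N - (s + 1)) + 1) j) ∘ Nat.succ)
            = fun t => wE r M (t + (N - s) + 1) j := by
          funext t
          show wE r M (Nat.succ t + (N - (s + 1)) + 1) j = _
          rw [show Nat.succ t + (N - (s + 1)) + 1 = t + (N - s) + 1 from by omega]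
        rw [hfun, Equiv.Perm.mul_apply]
        have h1 : ((List.map (fun t => wE r M (t + (N - s) + 1) j) (List.range s)).prod q)
            = ⟨(sigmaS M (h - 1) j - mtil M (h - 1) j) + CC M h (j + 1) k + y + mtil M (if h ≤ (N - s) then (N - s) else h) j, hRlt j (N - s) hj1 hjk (by omega)⟩ :=
          Fin.ext (ih (by omega) q hq)
        rw [h1]
        have h2 := rowstep j hj1 hjk (N - s) (by omega) (by omega)
          ⟨(sigmaS M (h - 1) j - mtil M (h - 1) j) + CC M h (j + 1) k + y + mtil M (if h ≤ (N - s) then (N - s) else h) j, hRlt j (N - s) hj1 hjk (by omega)⟩ rfl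
        rw [show 0 + (N - (s + 1)) + 1 = N - s from by omega]
        rw [h2]
        rw [show N - s - 1 = N - (s + 1) from by omega]
    have hcol : colProd r M j
        = ((List.range (N - 1)).map (fun t => wE r M (t + (N - (N - 1)) + 1) j)).prod := by
      unfold colProd
      have hfn : (fun t => wE r M (t + 2) j)
          = fun t => wE r M (t + (N - (N - 1)) + 1) j := by
        funext t
        rw [show t + (N - (N - 1)) + 1 = t + 2 from by omega]
      rw [hfn]
    rw [hcol]
    have htl := tail (N - 1) (le_refl _) q (by rw [hq, hRQ j hj1 hjk])
    rw [htl]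
    rw [show N - (N - 1) = 1 from by omega]
    rw [show (if h ≤ 1 then 1 else h) = h from by split_ifs <;> omega]
    have hA2h : mtil M h j = mtil M (h - 1) j + ent M h j :=
      mtil_succ M h j hh1 hhN hj1 (by omega)
    have hcc : CC M h j k = ent M h j + CC M h (j + 1) k :=
      CC_step M h j k hh1 hhN hj1 (by omega) hjk
    have hD : mtil M (h - 1) j ≤ sigmaS M (h - 1) j := mtil_le_sigmaS M _ _
    omega
  have outer : ∀ s, s ≤ k - 1 → ∀ q : Fin r, q.val = sigmaS M (h - 1) (k) + CC M h (k) k + y →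
      ((((List.range s).map (fun c => colProd r M (c + (k - 1 - s) + 1))).prod) q).val
        = sigmaS M (h - 1) ((k - s)) + CC M h ((k - s)) k + y := by
    intro s
    induction s with
    | zero =>
      intro _ q hq
      rw [show k - 0 = k from rfl]
      simpa using hq
    | succ s ih =>
      intro hs q hq
      rw [List.range_succ_eq_map, List.map_cons, List.prod_cons, List.map_map]
      have hfun : ((fun c => colProd r M (c + (k - 1 - (s + 1)) + 1)) ∘ Nat.succ)
          = fun c => colProd r M (c + (k - 1 - s) + 1) := by
        funext c
        show colProd r M (Nat.succ c + (k - 1 - (s + 1)) + 1) = _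
        rw [show Nat.succ c + (k - 1 - (s + 1)) + 1 = c + (k - 1 - s) + 1 from by omega]
      rw [hfun, Equiv.Perm.mul_apply]
      have h1 : ((List.map (fun c => colProd r M (c + (k - 1 - s) + 1)) (List.range s)).prod q)
          = ⟨sigmaS M (h - 1) ((k - s)) + CC M h ((k - s)) k + y, hQlt (k - s) (by omega)⟩ :=
        Fin.ext (ih (by omega) q hq)
      rw [h1]
      have h2 := colstep (k - (s + 1)) (by omega) (by omega)
        ⟨sigmaS M (h - 1) ((k - s)) + CC M h ((k - s)) k + y, hQlt (k - s) (by omega)⟩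
        (by rw [show k - (s + 1) + 1 = k - s from by omega])
      rw [show 0 + (k - 1 - (s + 1)) + 1 = k - (s + 1) from by omega]
      exact h2
  have hpi : piProd r M (k - 1)
      = ((List.range (k - 1)).map (fun c => colProd r M (c + (k - 1 - (k - 1)) + 1))).prod := by
    unfold piProd
    have hfn : (fun c => colProd r M (c + 1))
        = fun c => colProd r M (c + (k - 1 - (k - 1)) + 1) := by
      funext c
      rw [show c + (k - 1 - (k - 1)) + 1 = c + 1 from by omega]
    rw [hfn]
  rw [hpi]
  have hQk : p.val = sigmaS M (h - 1) (k) + CC M h (k) k + y := by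
    have := CC_kk M h k
    omega
  have hfin := outer (k - 1) (le_refl _) p hQk
  rw [hfin, show k - (k - 1) = 1 from by omega]

/-- Lemma `reflection`(3).  For `1 ≤ h ≤ N`, `1 < k ≤ N` (1-based),
`0 < x ≤ m_{h,k}` and `Σ_{j=1}^{k-1} m_{h,j} + x < λ_h` (where `λ = ro M`):
`s_{λ̃_{h-1} + Σ_{j=1}^{k-1} m_{h,j} + x} · Π_{k-1} = Π_{k-1} · s_{σ_{h-1,k}+x}`,
where `Π_{k-1} = (w_{2,1} ⋯ w_{N,1}) ⋯ (w_{2,k-1} ⋯ w_{N,k-1})`. -/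
theorem stmt7 (N r : ℕ) (hN : 2 ≤ N) (M : Fin N → Fin N → ℕ)
    (hMr : ∑ i, ∑ j, M i j = r)
    (h k x : ℕ) (hh1 : 1 ≤ h) (hhN : h ≤ N) (hk1 : 1 < k) (hkN : k ≤ N)
    (hx0 : 0 < x) (hx1 : x ≤ ent M h k)
    (hbound : (∑ j ∈ Finset.Icc 1 (k - 1), ent M h j) + x < rowSums M ⟨h - 1, by omega⟩) :
    sT r (ptil (rowSums M) (h - 1) + (∑ j ∈ Finset.Icc 1 (k - 1), ent M h j) + x)
        * piProd r M (k - 1)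
      = piProd r M (k - 1) * sT r (sigmaS M (h - 1) k + x) := by
  classical
  have hr : ∑ p : Fin N × Fin N, M p.1 p.2 = r := by
    rw [Fintype.sum_prod_type]; exact hMr
  have hicc := icc_sum M h k hh1 hhN (by omega) hkN
  have hs1 := sigmaS_one M h
  have hXX : x < XX M h k := by
    have h1 := rowSums_split M (k := k) h hh1 hhN
    have hb' : (∑ j ∈ Finset.Icc 1 (k - 1), ent M h j) + x
        < rowSums M ⟨h - 1, by omega⟩ := hbound
    rw [h1, hicc] at hb'
    omega
  have hQB := Q_bound M h k k r (le_refl k) hr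
  have hCkk := CC_kk M h k
  have hB : sigmaS M (h - 1) k + x < r := by omega
  have hQ1 := Q_bound M h 1 k r (by omega) hr
  have hA : ptil (rowSums M) (h - 1) + (∑ j ∈ Finset.Icc 1 (k - 1), ent M h j) + x < r := by
    rw [hicc, ← hs1]; omega
  have hA1 : 1 ≤ ptil (rowSums M) (h - 1) + (∑ j ∈ Finset.Icc 1 (k - 1), ent M h j) + x := by omega
  have key1 : piProd r M (k - 1) ⟨sigmaS M (h - 1) k + x - 1, by omega⟩ = ⟨ptil (rowSums M) (h - 1) + (∑ j ∈ Finset.Icc 1 (k - 1), ent M h j) + x - 1, by omega⟩ := by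
    refine Fin.ext ?_
    have hv := piProd_val N r hN M hr h k (x - 1) hh1 hhN hk1 hkN (by omega)
      ⟨sigmaS M (h - 1) k + x - 1, by omega⟩
      (show sigmaS M (h - 1) k + x - 1 = sigmaS M (h - 1) k + (x - 1) from by omega)
    rw [hv]
    show sigmaS M (h - 1) 1 + CC M h 1 k + (x - 1) = ptil (rowSums M) (h - 1) + (∑ j ∈ Finset.Icc 1 (k - 1), ent M h j) + x - 1
    omega
  have key2 : piProd r M (k - 1) ⟨sigmaS M (h - 1) k + x, hB⟩ = ⟨ptil (rowSums M) (h - 1) + (∑ j ∈ Finset.Icc 1 (k - 1), ent M h j) + x, hA⟩ := by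
    refine Fin.ext ?_
    have hv := piProd_val N r hN M hr h k x hh1 hhN hk1 hkN hXX
      ⟨sigmaS M (h - 1) k + x, hB⟩ (show sigmaS M (h - 1) k + x = sigmaS M (h - 1) k + x from rfl)
    rw [hv]
    show sigmaS M (h - 1) 1 + CC M h 1 k + x = ptil (rowSums M) (h - 1) + (∑ j ∈ Finset.Icc 1 (k - 1), ent M h j) + x
    omega
  rw [sT_eq r (ptil (rowSums M) (h - 1) + (∑ j ∈ Finset.Icc 1 (k - 1), ent M h j) + x) hA1 hA, sT_eq r (sigmaS M (h - 1) k + x) (by omega) hB]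
  rw [Equiv.mul_swap_eq_swap_mul, key1, key2]
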